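/- arXiv:2209.09392 — 3 statements merged into one kernel-verified Lean document; each statement's English description precedes it below -/
import Mathlib

section
/- Let k be a field of characteristic zero and A a commutative k-algebra (not assumed noetherian) which is reduced and satisfies Ω_{A/k} = 0. Then A is ind-étale over k; concretely, every finitely generated k-subalgebra B of A is étale over k (i.e., B is of finite type over k and formally étale over k). -/
universe u

open scoped TensorProduct
open TrivSqZeroExt

namespace MM


variable {k K : Type u} [Field k] [Field K] [Algebra k K]

/-- Auxiliary algebra map sending `X i` to `x i + δ_{i i₀} ε` in the dual numbers over `K`. -/
noncomputable def psi {ι : Type u} [DecidableEq ι] (x : ι → K) (i₀ : ι) :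
    MvPolynomial ι k →ₐ[k] TrivSqZeroExt K K :=
  MvPolynomial.aeval (fun i => inl (x i) + if i = i₀ then inr 1 else 0)

lemma psi_X {ι : Type u} [DecidableEq ι] (x : ι → K) (i₀ : ι) (i : ι) :
    psi (k := k) x i₀ (MvPolynomial.X i) = inl (x i) + if i = i₀ then inr 1 else 0 :=
  MvPolynomial.aeval_X _ i

lemma fst_psi {ι : Type u} [DecidableEq ι] (x : ι → K) (i₀ : ι) (p : MvPolynomial ι k) :
    fst (psi (k := k) x i₀ p) = MvPolynomial.aeval x p := by
  have hc : (TrivSqZeroExt.fstHom k K K).comp (psi (k := k) x i₀) = MvPolynomial.aeval x := by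
    apply MvPolynomial.algHom_ext
    intro i
    rw [AlgHom.comp_apply, psi_X, MvPolynomial.aeval_X]
    rcases eq_or_ne i i₀ with rfl | hi
    · simp
    · simp [hi]
  exact congrArg (fun (G : MvPolynomial ι k →ₐ[k] K) => G p) hc

lemma snd_psi_X₀ {ι : Type u} [DecidableEq ι] (x : ι → K) (i₀ : ι) :
    snd (psi (k := k) x i₀ (MvPolynomial.X i₀)) = 1 := by
  rw [psi_X]
  simp

set_option maxHeartbeats 1000000 in
theorem isAlgebraic_of_subsingleton_kaehler (k K : Type u) [Field k] [CharZero k] [Field K]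
    [Algebra k K] (h : Subsingleton (Ω[K⁄k])) : Algebra.IsAlgebraic k K := by
  obtain ⟨s, hs⟩ := exists_isTranscendenceBasis k K
  rcases isEmpty_or_nonempty s with he | hne
  · exact hs.isEmpty_iff_isAlgebraic.mp he
  exfalso
  classical
  obtain ⟨i₀⟩ := hne
  set x : s → K := Subtype.val with hxdef
  have hx : AlgebraicIndependent k x := hs.1
  have hinj : Function.Injective (MvPolynomial.aeval x : MvPolynomial s k →ₐ[k] K) :=
    algebraicIndependent_iff_injective_aeval.mp hx
  have hunit : ∀ y : nonZeroDivisors (MvPolynomial s k), IsUnit (psi (k := k) x i₀ y) := by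
    intro y
    rw [isUnit_iff_isUnit_fst, fst_psi, isUnit_iff_ne_zero]
    intro h0
    exact nonZeroDivisors.ne_zero y.2 (hinj (by simpa using h0))
  set Blift : FractionRing (MvPolynomial s k) →ₐ[k] TrivSqZeroExt K K :=
    IsLocalization.liftAlgHom hunit with hBl
  have hBlift_alg : ∀ p : MvPolynomial s k,
      Blift (algebraMap (MvPolynomial s k) (FractionRing (MvPolynomial s k)) p)
        = psi (k := k) x i₀ p := by
    intro p
    rw [hBl, IsLocalization.liftAlgHom_apply, IsLocalization.lift_eq]
    rfl
  have hBliftfst : ∀ z : FractionRing (MvPolynomial s k),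
      fst (Blift z) = IsFractionRing.lift (algebraicIndependent_iff_injective_aeval.1 hx) z := by
    intro z
    have hc : ((TrivSqZeroExt.fstHom k K K).comp Blift : FractionRing (MvPolynomial s k) →+* K)
        = (IsFractionRing.lift (algebraicIndependent_iff_injective_aeval.1 hx) :
            FractionRing (MvPolynomial s k) →+* K) := by
      apply IsLocalization.ringHom_ext (nonZeroDivisors (MvPolynomial s k))
      refine RingHom.ext fun p => ?_
      rw [RingHom.comp_apply, RingHom.comp_apply]
      show fst (Blift (algebraMap _ _ p)) = _
      rw [hBlift_alg, IsFractionRing.lift_algebraMap]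
      exact fst_psi x i₀ p
    exact congrArg (fun (G : FractionRing (MvPolynomial s k) →+* K) => G z) hc
  set F := IntermediateField.adjoin k (Set.range x) with hFdef
  set e : FractionRing (MvPolynomial s k) ≃ₐ[k] F := hx.aevalEquivField with hedef
  letI : Algebra (FractionRing (MvPolynomial s k)) K := ((F.val.comp e.toAlgHom).toRingHom).toAlgebra
  have halgMap : ∀ z : FractionRing (MvPolynomial s k),
      algebraMap (FractionRing (MvPolynomial s k)) K z = (e z : K) := fun _ => rfl
  have hkF' : ∀ c : k, algebraMap k K c
      = algebraMap (FractionRing (MvPolynomial s k)) K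
        (algebraMap k (FractionRing (MvPolynomial s k)) c) := by
    intro c
    rw [halgMap, AlgEquiv.commutes]
    exact (IsScalarTower.algebraMap_apply k F K c).trans rfl
  have hBliftfst' : ∀ z : FractionRing (MvPolynomial s k),
      fst (Blift z) = algebraMap (FractionRing (MvPolynomial s k)) K z := by
    intro z
    rw [hBliftfst, halgMap, hedef, hx.aevalEquivField_apply_coe]
  letI : Algebra (FractionRing (MvPolynomial s k)) F := e.toAlgHom.toRingHom.toAlgebra
  haveI : IsScalarTower (FractionRing (MvPolynomial s k)) F K :=
    IsScalarTower.of_algebraMap_eq' (RingHom.ext fun z => rfl)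
  haveI : Algebra.IsIntegral (FractionRing (MvPolynomial s k)) F := ⟨fun f => by
    have hf : f = algebraMap (FractionRing (MvPolynomial s k)) F (e.symm f) :=
      (e.apply_symm_apply f).symm
    rw [hf]
    exact isIntegral_algebraMap⟩
  haveI : CharZero F := charZero_of_injective_algebraMap (algebraMap k F).injective
  haveI halgFK : Algebra.IsAlgebraic F K := hs.isAlgebraic_field
  haveI : Algebra.IsIntegral F K := ⟨fun a => (halgFK.isAlgebraic a).isIntegral⟩
  haveI : Algebra.IsIntegral (FractionRing (MvPolynomial s k)) K := Algebra.IsIntegral.trans F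
  haveI : CharZero (FractionRing (MvPolynomial s k)) :=
    charZero_of_injective_algebraMap (algebraMap k (FractionRing (MvPolynomial s k))).injective
  haveI : Algebra.IsSeparable (FractionRing (MvPolynomial s k)) K :=
    Algebra.IsSeparable.of_integral _ K
  haveI : Algebra.FormallyEtale (FractionRing (MvPolynomial s k)) K :=
    Algebra.FormallyEtale.of_isSeparable _ K
  letI : Algebra (FractionRing (MvPolynomial s k)) (TrivSqZeroExt K K) :=
    Blift.toRingHom.toAlgebra
  set I : Ideal (TrivSqZeroExt K K) :=
    RingHom.ker (TrivSqZeroExt.fstHom k K K : TrivSqZeroExt K K →ₐ[k] K) with hIdef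
  have memI : ∀ b : TrivSqZeroExt K K, b ∈ I ↔ fst b = 0 := fun b => RingHom.mem_ker
  have hI : I ^ 2 = ⊥ := by
    rw [pow_two, eq_bot_iff]
    refine Ideal.mul_le.mpr fun r hr t ht => ?_
    rw [memI] at hr ht
    rw [Ideal.mem_bot]
    ext
    · rw [fst_mul, hr, zero_mul, fst_zero]
    · rw [snd_mul, hr, ht, snd_zero]
      simp
  set g : K →ₐ[FractionRing (MvPolynomial s k)] (TrivSqZeroExt K K) ⧸ I :=
    { toRingHom := (Ideal.Quotient.mk I).comp (algebraMap K (TrivSqZeroExt K K))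
      commutes' := by
        intro z
        show Ideal.Quotient.mk I
            (algebraMap K (TrivSqZeroExt K K) (algebraMap (FractionRing (MvPolynomial s k)) K z))
          = algebraMap (FractionRing (MvPolynomial s k)) ((TrivSqZeroExt K K) ⧸ I) z
        have h2 : algebraMap (FractionRing (MvPolynomial s k)) ((TrivSqZeroExt K K) ⧸ I) z
            = Ideal.Quotient.mk I (Blift z) := rfl
        rw [h2, Ideal.Quotient.mk_eq_mk_iff_sub_mem, memI, fst_sub, hBliftfst',
          TrivSqZeroExt.algebraMap_eq_inl, fst_inl, sub_self] } with hgdef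
  obtain ⟨σ, hσ⟩ := Algebra.FormallySmooth.comp_surjective
    (R := FractionRing (MvPolynomial s k)) (A := K) I hI g
  set σk : K →ₐ[k] TrivSqZeroExt K K :=
    { toRingHom := (σ : K →+* TrivSqZeroExt K K)
      commutes' := fun c => by
        show σ (algebraMap k K c) = _
        rw [hkF' c, σ.commutes]
        exact Blift.commutes c } with hσkdef
  have he2 : (Ideal.Quotient.mkₐ k I).comp σk
      = IsScalarTower.toAlgHom k K ((TrivSqZeroExt K K) ⧸ I) := by
    refine AlgHom.ext fun a => ?_
    exact AlgHom.congr_fun hσ a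
  set D := derivationToSquareZeroOfLift I hI σk he2 with hDdef
  have hD0 : D (x i₀) = 0 := by
    rw [← Derivation.liftKaehlerDifferential_comp_D D (x i₀),
      Subsingleton.elim (KaehlerDifferential.D k K (x i₀)) 0, map_zero]
  have hval : (D (x i₀) : TrivSqZeroExt K K)
      = σ (x i₀) - algebraMap K (TrivSqZeroExt K K) (x i₀) := rfl
  have hx0 : algebraMap (FractionRing (MvPolynomial s k)) K
      (algebraMap (MvPolynomial s k) _ (MvPolynomial.X i₀)) = x i₀ := by
    rw [halgMap, hedef, hx.aevalEquivField_algebraMap_apply_coe]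
    simp
  have hσx : σ (x i₀) = psi (k := k) x i₀ (MvPolynomial.X i₀) := by
    rw [← hx0, σ.commutes]
    show Blift _ = _
    rw [hBlift_alg]
  have hsnd : snd ((D (x i₀) : TrivSqZeroExt K K)) = 1 := by
    rw [hval, snd_sub, hσx, TrivSqZeroExt.algebraMap_eq_inl, snd_inl, sub_zero, snd_psi_X₀]
  rw [hD0] at hsnd
  simp only [ZeroMemClass.coe_zero, snd_zero] at hsnd
  exact one_ne_zero hsnd.symm




theorem formallyEtale_of_finite (k B : Type u) [Field k] [CharZero k] [CommRing B]
    [Algebra k B] [IsReduced B] [Module.Finite k B] : Algebra.FormallyEtale k B := by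
  haveI : IsArtinianRing B := IsArtinianRing.of_finite k B
  haveI : Finite {I : Ideal B | I.IsMaximal} :=
    Set.Finite.to_subtype ((Set.finite_range (fun P : PrimeSpectrum B => P.asIdeal)).subset
      (fun I hI => ⟨⟨I, hI.isPrime⟩, rfl⟩))
  let e := IsArtinianRing.equivPi B
  let f : B →ₐ[k] ∀ I : {I : Ideal B | I.IsMaximal}, B ⧸ I.1 :=
    Pi.algHom _ _ (fun I => Ideal.Quotient.mkₐ k I.1)
  have hbij : Function.Bijective f := by
    constructor
    · intro x y hxy
      apply e.injective
      funext m
      exact congrFun hxy ⟨m.asIdeal, m.isMaximal⟩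
    · intro g
      refine ⟨e.symm (fun m => g ⟨m.asIdeal, m.isMaximal⟩), ?_⟩
      funext I
      exact congrFun (e.apply_symm_apply (fun m => g ⟨m.asIdeal, m.isMaximal⟩)) ⟨I.1, I.2⟩
  let eq : B ≃ₐ[k] ∀ I : {I : Ideal B | I.IsMaximal}, B ⧸ I.1 := AlgEquiv.ofBijective f hbij
  haveI : ∀ I : {I : Ideal B | I.IsMaximal}, Algebra.FormallyEtale k (B ⧸ I.1) := by
    intro I
    haveI : I.1.IsMaximal := I.2
    letI : Field (B ⧸ I.1) := Ideal.Quotient.field I.1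
    haveI : Module.Finite k (B ⧸ I.1) :=
      Module.Finite.of_surjective (Ideal.Quotient.mkₐ k I.1).toLinearMap
        Ideal.Quotient.mk_surjective
    haveI : Algebra.IsIntegral k (B ⧸ I.1) := Algebra.IsIntegral.of_finite k _
    haveI : Algebra.IsSeparable k (B ⧸ I.1) := Algebra.IsSeparable.of_integral _ _
    exact Algebra.FormallyEtale.of_isSeparable k (B ⧸ I.1)
  haveI : Algebra.FormallyEtale k (∀ I : {I : Ideal B | I.IsMaximal}, B ⧸ I.1) := by
    rw [Algebra.FormallyEtale.iff_formallyUnramified_and_formallySmooth]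
    exact ⟨Algebra.FormallyUnramified.pi_iff _ |>.mpr fun I => inferInstance,
      Algebra.FormallySmooth.pi_iff _ |>.mpr fun I => inferInstance⟩
  exact Algebra.FormallyEtale.of_equiv eq.symm

end MM

namespace MM

/-- Every element of a `k`-algebra with vanishing Kähler differentials is algebraic,
in characteristic zero. -/
theorem isAlgebraic_elem (k A : Type u) [Field k] [CharZero k] [CommRing A] [Algebra k A]
    (h : Subsingleton (Ω[A⁄k])) (a : A) : IsAlgebraic k a := by
  by_contra ha
  haveI : Algebra.FormallyUnramified k A := ⟨h⟩
  set S : Submonoid A :=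
    Submonoid.map (Polynomial.aeval a : Polynomial k →ₐ[k] A) (nonZeroDivisors (Polynomial k))
    with hSdef
  have h0S : (0 : A) ∉ S := by
    rintro ⟨q, hq, hq0⟩
    exact ha ⟨q, nonZeroDivisors.ne_zero hq, hq0⟩
  have hbotdisj : Disjoint ((⊥ : Ideal A) : Set A) (S : Set A) := by
    refine Set.disjoint_left.mpr ?_
    intro y hy hyS
    rw [SetLike.mem_coe, Ideal.mem_bot] at hy
    subst hy
    exact h0S hyS
  obtain ⟨p, hp, -, hdisj⟩ := Ideal.exists_le_prime_disjoint (⊥ : Ideal A) S hbotdisj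
  haveI := hp
  set b : A ⧸ p := Ideal.Quotient.mk p a with hbdef
  have hb : ¬ IsAlgebraic k b := by
    rintro ⟨q, hq0, hq⟩
    have hmem : Polynomial.aeval a q ∈ p := by
      rw [← Ideal.Quotient.eq_zero_iff_mem]
      rw [hbdef] at hq
      rw [← hq]
      exact (Polynomial.aeval_algHom_apply (Ideal.Quotient.mkₐ k p) a q).symm
    exact Set.disjoint_left.mp hdisj hmem ⟨q, mem_nonZeroDivisors_of_ne_zero hq0, rfl⟩
  haveI : Algebra.FormallyUnramified k (A ⧸ p) :=
    Algebra.FormallyUnramified.of_surjective (IsScalarTower.toAlgHom k A (A ⧸ p))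
      Ideal.Quotient.mk_surjective
  haveI : Algebra.FormallyUnramified (A ⧸ p) (FractionRing (A ⧸ p)) :=
    Algebra.FormallyUnramified.of_isLocalization (nonZeroDivisors (A ⧸ p))
  haveI : Algebra.FormallyUnramified k (FractionRing (A ⧸ p)) :=
    Algebra.FormallyUnramified.comp k (A ⧸ p) (FractionRing (A ⧸ p))
  haveI : Algebra.IsAlgebraic k (FractionRing (A ⧸ p)) :=
    isAlgebraic_of_subsingleton_kaehler k (FractionRing (A ⧸ p))
      Algebra.FormallyUnramified.subsingleton_kaehlerDifferential
  have halg : IsAlgebraic k (algebraMap (A ⧸ p) (FractionRing (A ⧸ p)) b) :=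
    Algebra.IsAlgebraic.isAlgebraic _
  exact hb ((isAlgebraic_algebraMap_iff (IsFractionRing.injective (A ⧸ p)
    (FractionRing (A ⧸ p)))).mp halg)

end MM

/-- **Ind-étale vs formally étale** (Mondal–Mukhopadhyay).
Let `k` be a field of characteristic zero and `A` a reduced commutative `k`-algebra with
`Ω_{A/k} = 0`. Then `A` is ind-étale over `k`: every finitely generated `k`-subalgebra `B`
of `A` is étale over `k`, i.e. of finite type and formally étale over `k`. -/
theorem formally_unramified_plus_reduced_implies_ind_etale
    (k A : Type u) [Field k] [CharZero k] [CommRing A] [Algebra k A] [IsReduced A]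
    (h : Subsingleton (Ω[A⁄k])) :
    ∀ B : Subalgebra k A, B.FG →
      Algebra.FiniteType k B ∧ Algebra.FormallyEtale k B := by
  intro B hB
  haveI hft : Algebra.FiniteType k B := (Subalgebra.fg_iff_finiteType B).mp hB
  haveI : Algebra.IsIntegral k B := by
    refine ⟨fun b => ?_⟩
    obtain ⟨q, hq, hq0⟩ := (MM.isAlgebraic_elem k A h (b : A)).isIntegral
    refine ⟨q, hq, ?_⟩
    apply Subtype.val_injective
    show B.val (Polynomial.eval₂ (algebraMap k B) b q) = B.val 0
    rw [map_zero]
    have hh : B.val (Polynomial.aeval b q) = Polynomial.aeval (b : A) q :=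
      (Polynomial.aeval_algHom_apply B.val b q).symm
    simpa [Polynomial.aeval_def] using hh.trans (by simpa [Polynomial.aeval_def] using hq0)
  haveI : Module.Finite k B := Algebra.IsIntegral.finite
  haveI : IsReduced B := isReduced_of_injective (B.val) Subtype.val_injective
  exact ⟨hft, MM.formallyEtale_of_finite k B⟩
end

section
/- Let k be a field of characteristic zero and A a field extension of k. Suppose ι : k[t₁, …, t_s] → A is an injective k-algebra homomorphism from the polynomial ring in s ≥ 1 variables. Then dι(t₁) ∧ dι(t₂) ∧ … ∧ dι(t_s) is a nonzero element of ⋀^s_A Ω_{A/k}. -/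
set_option maxHeartbeats 1000000

universe uu

open TrivSqZeroExt in
/-- Extend a derivation along a formally smooth algebra. -/
theorem extend_derivation {R : Type*} {Q A : Type uu} [CommRing R] [CommRing Q] [CommRing A]
    [Algebra R Q] [Algebra R A] [Algebra Q A] [IsScalarTower R Q A]
    [Algebra.FormallySmooth Q A] (d : Derivation R Q A) :
    ∃ D : Derivation R A A, ∀ q, D (algebraMap Q A q) = d q := by
  classical
  set B := TrivSqZeroExt A A with hB
  have hmul : ∀ x y : B, (x * y).snd = x.fst * y.snd + y.fst * x.snd := by
    intro x y
    rw [TrivSqZeroExt.snd_mul]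
    simp only [smul_eq_mul, op_smul_eq_smul]
  let twist : Q →ₐ[R] B :=
  { toFun := fun q => (algebraMap Q A q, d q)
    map_one' := TrivSqZeroExt.ext (by simp) (by simp)
    map_mul' := fun q r => TrivSqZeroExt.ext
      (by exact map_mul _ q r)
      (by
        erw [hmul]
        show d (q * r) = algebraMap Q A q * d r + algebraMap Q A r * d q
        rw [Derivation.leibniz]
        simp [Algebra.smul_def, add_comm])
    map_zero' := TrivSqZeroExt.ext (by simp) (by simp)
    map_add' := fun q r => TrivSqZeroExt.ext
      (by exact map_add _ q r)
      (by exact map_add d q r)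
    commutes' := fun r => by
      rw [TrivSqZeroExt.algebraMap_eq_inl']
      exact TrivSqZeroExt.ext (by exact (IsScalarTower.algebraMap_apply R Q A r).symm)
        (by show d (algebraMap R Q r) = 0; exact d.map_algebraMap r) }
  letI : Algebra Q B := twist.toRingHom.toAlgebra
  let fstQ : B →ₐ[Q] A :=
  { toFun := TrivSqZeroExt.fst
    map_one' := rfl
    map_mul' := fun x y => TrivSqZeroExt.fst_mul x y
    map_zero' := rfl
    map_add' := fun x y => rfl
    commutes' := fun q => rfl }
  have hfst_surj : Function.Surjective fstQ := fun a => ⟨(a, 0), rfl⟩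
  set I : Ideal B := RingHom.ker fstQ with hI
  have hI2 : I ^ 2 = ⊥ := by
    rw [pow_two, eq_bot_iff, Ideal.mul_le]
    intro x hx y hy
    have hx0 : x.fst = 0 := hx
    have hy0 : y.fst = 0 := hy
    rw [Ideal.mem_bot]
    exact TrivSqZeroExt.ext (by rw [TrivSqZeroExt.fst_mul, hx0, zero_mul]; rfl)
      (by rw [hmul, hx0, hy0]; simp)
  let e : (B ⧸ I) ≃ₐ[Q] A := Ideal.quotientKerAlgEquivOfSurjective hfst_surj
  obtain ⟨σ, hσ⟩ := Algebra.FormallySmooth.exists_lift I ⟨2, hI2⟩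
    ((e.symm : A →ₐ[Q] B ⧸ I))
  have hfstσ : ∀ a : A, (σ a).fst = a := by
    intro a
    have h1 : e (Ideal.Quotient.mkₐ Q I (σ a)) = e (e.symm a) := by
      rw [← AlgHom.comp_apply, hσ]; rfl
    rw [e.apply_symm_apply] at h1
    exact h1
  have hra : ∀ r : R, σ (algebraMap R A r) = ((algebraMap R A r, 0) : B) := by
    intro r
    have h1 : σ (algebraMap R A r) = σ (algebraMap Q A (algebraMap R Q r)) := by
      rw [← IsScalarTower.algebraMap_apply R Q A]
    rw [h1, σ.commutes]
    show twist (algebraMap R Q r) = _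
    exact TrivSqZeroExt.ext (by exact (IsScalarTower.algebraMap_apply R Q A r).symm)
      (by show d (algebraMap R Q r) = 0; exact d.map_algebraMap r)
  refine ⟨{ toFun := fun a => (σ a).snd
            map_add' := fun a b => by
              show (σ (a + b)).snd = (σ a).snd + (σ b).snd
              rw [map_add]; rfl
            map_smul' := fun r a => by
              show (σ (r • a)).snd = r • (σ a).snd
              rw [Algebra.smul_def, map_mul, hmul, hra, hfstσ]
              show algebraMap R A r * (σ a).snd + a * 0 = r • (σ a).snd
              rw [mul_zero, add_zero, Algebra.smul_def]
            map_one_eq_zero' := by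
              show (σ 1).snd = 0
              rw [map_one]; rfl
            leibniz' := fun a b => by
              show (σ (a * b)).snd = a • (σ b).snd + b • (σ a).snd
              rw [map_mul, hmul, hfstσ, hfstσ, smul_eq_mul, smul_eq_mul] }, ?_⟩
  intro q
  show (σ (algebraMap Q A q)).snd = d q
  rw [σ.commutes]
  rfl

/-- Transfer algebraicity along a ring isomorphism of base fields. -/
theorem isAlgebraic_of_ringEquiv {K L A : Type*} [Field K] [Field L] [CommRing A]
    [Algebra K A] [Algebra L A] (e : K ≃+* L)
    (he : ∀ x, algebraMap K A x = algebraMap L A (e x)) [Algebra.IsAlgebraic L A] :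
    Algebra.IsAlgebraic K A := by
  constructor
  intro a
  obtain ⟨p, hp, hpa⟩ := Algebra.IsAlgebraic.isAlgebraic (R := L) a
  refine ⟨p.map (e.symm : L →+* K), fun h => hp ?_, ?_⟩
  · have := Polynomial.map_injective (e.symm : L →+* K) e.symm.injective
    apply this
    rw [h, Polynomial.map_zero]
  · rw [Polynomial.aeval_def, Polynomial.eval₂_map]
    have hcomp : (algebraMap K A).comp (e.symm : L →+* K) = algebraMap L A := by
      ext x
      rw [RingHom.comp_apply, he]
      simp
    rw [hcomp]
    exact hpa

/-- Algebraic independence descends to the bottom intermediate field. -/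
theorem algebraicIndependent_bot {k A : Type*} {ιt : Type*} [Field k] [Field A] [Algebra k A]
    {t : ιt → A} (ht : AlgebraicIndependent k t) :
    AlgebraicIndependent (⊥ : IntermediateField k A) t := by
  set F := (⊥ : IntermediateField k A)
  let e : F ≃ₐ[k] k := IntermediateField.botEquiv k A
  have key : ∀ a : F, algebraMap F A a = algebraMap k A (e a) := by
    intro a
    conv_lhs => rw [show a = algebraMap k F (e a) by
      rw [← IntermediateField.botEquiv_symm]; exact (e.symm_apply_apply a).symm]
    rw [← IsScalarTower.algebraMap_apply]
  rw [algebraicIndependent_iff_injective_aeval] at ht ⊢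
  have hcomp : ((MvPolynomial.aeval t : MvPolynomial ιt k →ₐ[k] A) : MvPolynomial ιt k →+* A).comp
      (MvPolynomial.map (e : F →+* k)) = ((MvPolynomial.aeval t : MvPolynomial ιt F →ₐ[F] A) : MvPolynomial ιt F →+* A) := by
    apply MvPolynomial.ringHom_ext
    · intro a
      simp only [RingHom.comp_apply, MvPolynomial.map_C, RingHom.coe_coe, MvPolynomial.aeval_C]
      exact (key a).symm
    · intro i
      simp
  intro p q h
  have h2 : MvPolynomial.aeval (R := k) t (MvPolynomial.map (e : F →+* k) p)
      = MvPolynomial.aeval (R := k) t (MvPolynomial.map (e : F →+* k) q) := by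
    have hp := congrFun (congrArg (fun f : MvPolynomial ιt F →+* A => (f : MvPolynomial ιt F → A)) hcomp)
    rw [show (MvPolynomial.aeval (R := k) t) (MvPolynomial.map (e : F →+* k) p)
       = MvPolynomial.aeval (R := F) t p from hp p,
       show (MvPolynomial.aeval (R := k) t) (MvPolynomial.map (e : F →+* k) q)
       = MvPolynomial.aeval (R := F) t q from hp q]
    exact h
  exact MvPolynomial.map_injective _ e.injective (ht h2)

/-- Main construction: derivations with prescribed values at an algebraically
independent family, over a char-zero base field. -/
theorem exists_derivations {F A : Type uu} [Field F] [CharZero F] [Field A] [Algebra F A]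
    {n : ℕ} {t : Fin n → A} (ht : AlgebraicIndependent F t) :
    ∃ D : Fin n → Derivation F A A, ∀ i j, D i (t j) = if i = j then 1 else 0 := by
  classical
  -- extend `range t` to a maximal algebraically independent set
  obtain ⟨S, hsub, hmax⟩ := exists_maximal_algebraicIndependent (Set.range t) Set.univ
    (Set.subset_univ _) ht.coe_range
  have hS : AlgebraicIndependent F ((↑) : S → A) := hmax.prop.1
  have hTB : IsTranscendenceBasis F ((↑) : S → A) := by
    refine ⟨hS, fun u hu hsu => ?_⟩
    simp only [Subtype.range_coe_subtype, Set.setOf_mem_eq] at hsu ⊢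
    exact hmax.eq_of_le ⟨hu, Set.subset_univ _⟩ hsu
  set Q := MvPolynomial S F with hQ
  have hg : Function.Injective (MvPolynomial.aeval ((↑) : S → A) : Q →ₐ[F] A) :=
    algebraicIndependent_iff_injective_aeval.1 hS
  set K₀ := FractionRing Q with hK₀
  let φ : K₀ →ₐ[F] A := IsFractionRing.liftAlgHom hg
  letI : Algebra Q A := (MvPolynomial.aeval ((↑) : S → A) : Q →ₐ[F] A).toRingHom.toAlgebra
  letI : Algebra K₀ A := φ.toRingHom.toAlgebra
  haveI : IsScalarTower F Q A := IsScalarTower.of_algebraMap_eq fun x =>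
    ((MvPolynomial.aeval ((↑) : S → A) : Q →ₐ[F] A).commutes x).symm
  haveI : IsScalarTower F K₀ A := IsScalarTower.of_algebraMap_eq fun x => (φ.commutes x).symm
  haveI : IsScalarTower Q K₀ A := IsScalarTower.of_algebraMap_eq fun q => by
    show MvPolynomial.aeval _ q = φ (algebraMap Q K₀ q)
    rw [show φ (algebraMap Q K₀ q) = IsFractionRing.lift hg (algebraMap Q K₀ q) from rfl,
      IsFractionRing.lift_algebraMap]
    rfl
  -- `A` is algebraic over `K₀`
  haveI : Algebra.IsAlgebraic (IntermediateField.adjoin F (Set.range ((↑) : S → A))) A :=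
    hTB.isAlgebraic_field
  haveI : Algebra.IsAlgebraic K₀ A := by
    refine isAlgebraic_of_ringEquiv (L := IntermediateField.adjoin F (Set.range ((↑) : S → A)))
      hS.aevalEquivField.toRingEquiv fun x => ?_
    show IsFractionRing.lift hg x = _
    exact (hS.aevalEquivField_apply_coe x).symm
  haveI : CharZero K₀ := charZero_of_injective_algebraMap (algebraMap F K₀).injective
  haveI : Algebra.IsIntegral K₀ A := inferInstance
  haveI : Algebra.IsSeparable K₀ A := inferInstance
  haveI := Algebra.FormallyEtale.of_isSeparable K₀ A
  haveI : Algebra.FormallySmooth Q K₀ := Algebra.FormallySmooth.of_isLocalization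
    (nonZeroDivisors Q)
  haveI : Algebra.FormallySmooth Q A := Algebra.FormallySmooth.comp Q K₀ A
  -- the coordinate derivations
  have htinj : Function.Injective t := ht.injective
  let w : Fin n → S := fun i => ⟨t i, hsub (Set.mem_range_self i)⟩
  have hwinj : Function.Injective w := fun i j hij => htinj (congrArg Subtype.val hij)
  have key : ∀ i : Fin n, ∃ D : Derivation F A A, ∀ j, D (t j) = if i = j then 1 else 0 := by
    intro i
    let d : Derivation F Q A := MvPolynomial.mkDerivation F (fun v : S => if v = w i then 1 else 0)
    obtain ⟨D, hD⟩ := extend_derivation d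
    refine ⟨D, fun j => ?_⟩
    have h1 : t j = algebraMap Q A (MvPolynomial.X (w j)) := by
      show t j = MvPolynomial.aeval ((↑) : S → A) (MvPolynomial.X (w j))
      simp [w]
    rw [h1, hD, MvPolynomial.mkDerivation_X]
    by_cases h : i = j
    · subst h; simp
    · rw [if_neg (fun hw => h (hwinj hw).symm), if_neg h]
  choose D hD using key
  exact ⟨D, hD⟩


/-- Let `k` be a field of characteristic zero and `A` a field extension of `k`. If
`ι : k[t₁, …, t_s] → A` is an injective `k`-algebra homomorphism with `s ≥ 1`, then
`dι(t₁) ∧ … ∧ dι(t_s)` is a nonzero element of `⋀^s_A Ω_{A/k}`. -/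
theorem wedge_of_differentials_of_injection_ne_zero_field_case
    (k A : Type*) [Field k] [CharZero k] [Field A] [Algebra k A]
    (s : ℕ) (hs : 1 ≤ s) (ι : MvPolynomial (Fin s) k →ₐ[k] A)
    (hι : Function.Injective ι) :
    ExteriorAlgebra.ιMulti A s
      (fun i => KaehlerDifferential.D k A (ι (MvPolynomial.X i))) ≠ 0 := by
  classical
  set t : Fin s → A := fun i => ι (MvPolynomial.X i) with htdef
  have ht : AlgebraicIndependent k t := by
    show Function.Injective (MvPolynomial.aeval t : MvPolynomial (Fin s) k →ₐ[k] A)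
    have : (MvPolynomial.aeval t : MvPolynomial (Fin s) k →ₐ[k] A) = ι := by
      apply MvPolynomial.algHom_ext
      intro i
      simp [htdef]
    rw [this]
    exact hι
  -- pass to the bottom intermediate field to equalize universes
  set F := (⊥ : IntermediateField k A) with hF
  haveI : CharZero F := charZero_of_injective_algebraMap (algebraMap k F).injective
  have htF : AlgebraicIndependent F t := algebraicIndependent_bot ht
  obtain ⟨D, hD⟩ := exists_derivations htF
  -- restrict the derivations to `k`
  let Dk : Fin s → Derivation k A A := fun i => (D i).restrictScalars k
  -- build the alternating form detecting the wedge
  let G : Ω[A⁄k] →ₗ[A] (Fin s → A) := LinearMap.pi fun i => (Dk i).liftKaehlerDifferential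
  let Φ : Ω[A⁄k] [⋀^Fin s]→ₗ[A] A := (Matrix.detRowAlternating).compLinearMap G
  let f : ∀ n, Ω[A⁄k] [⋀^Fin n]→ₗ[A] A :=
    Function.update (fun n => (0 : Ω[A⁄k] [⋀^Fin n]→ₗ[A] A)) s Φ
  intro h
  have hone : ExteriorAlgebra.liftAlternating f
      (ExteriorAlgebra.ιMulti A s fun i => KaehlerDifferential.D k A (t i)) = 1 := by
    rw [ExteriorAlgebra.liftAlternating_apply_ιMulti]
    have hfs : f s = Φ := Function.update_self s Φ (fun n => (0 : Ω[A⁄k] [⋀^Fin n]→ₗ[A] A))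
    rw [hfs]
    show Matrix.detRowAlternating (fun j => G (KaehlerDifferential.D k A (t j))) = 1
    have : (Matrix.of fun j => G (KaehlerDifferential.D k A (t j))) = (1 : Matrix (Fin s) (Fin s) A) := by
      ext j i
      show (Dk i).liftKaehlerDifferential (KaehlerDifferential.D k A (t j)) = _
      rw [Derivation.liftKaehlerDifferential_comp_D]
      show D i (t j) = _
      rw [hD i j, Matrix.one_apply]
      simp [eq_comm]
    show Matrix.det (Matrix.of fun j => G (KaehlerDifferential.D k A (t j))) = 1
    rw [this, Matrix.det_one]
  rw [h, map_zero] at hone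
  exact zero_ne_one hone
end

section
/- Let k be a field, A a commutative k-algebra (not assumed noetherian), and n a natural number. Suppose that for every m, every injective k-algebra homomorphism from the polynomial ring k[x₁, …, x_m] into A satisfies m ≤ n. Then every finite type k-subalgebra of A has Krull dimension at most n, and moreover the Krull dimension of A itself is at most n. -/
open MvPolynomial

/-- Evaluating a multivariate polynomial at `Fin.cons a b` equals evaluating the
`finSuccEquiv` image as a one-variable polynomial at `a`, coefficients evaluated at `b`. -/
private lemma aux_eval {k : Type*} [CommSemiring k] {D : Type*} [CommRing D] [Algebra k D]
    {m : ℕ} (a : D) (b : Fin m → D) (P : MvPolynomial (Fin (m + 1)) k) :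
    MvPolynomial.aeval (Fin.cons a b : Fin (m + 1) → D) P
      = Polynomial.eval₂ (MvPolynomial.aeval b).toRingHom a
          (MvPolynomial.finSuccEquiv k m P) := by
  have key : (MvPolynomial.aeval (Fin.cons a b : Fin (m + 1) → D)).toRingHom
      = (Polynomial.eval₂RingHom (MvPolynomial.aeval b).toRingHom a).comp
        ((MvPolynomial.finSuccEquiv k m : MvPolynomial (Fin (m + 1)) k ≃ₐ[k] _) :
          MvPolynomial (Fin (m + 1)) k →+* Polynomial (MvPolynomial (Fin m) k)) := by
    apply MvPolynomial.ringHom_ext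
    · intro r
      simp [MvPolynomial.finSuccEquiv_apply]
    · intro i
      refine Fin.cases ?_ ?_ i
      · simp [MvPolynomial.finSuccEquiv_apply]
      · intro j
        simp [MvPolynomial.finSuccEquiv_apply]
  have := RingHom.congr_fun key P
  simpa using this


private lemma mk_aeval {k A : Type*} [CommSemiring k] [CommRing A] [Algebra k A]
    (I : Ideal A) {σ : Type*} (b : σ → A) (c : MvPolynomial σ k) :
    MvPolynomial.aeval ((Ideal.Quotient.mk I) ∘ b) c
      = Ideal.Quotient.mk I (MvPolynomial.aeval b c) := by
  have hfun : ⇑(Ideal.Quotient.mk I) ∘ b = fun i => (Ideal.Quotient.mkₐ k I) (b i) := rfl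
  rw [hfun, ← MvPolynomial.comp_aeval_apply]
  rfl

/-- Kill-a-polynomial lemma: in a domain `D`, if `a ≠ 0`, `a` vanishes mod an ideal `p`,
and evaluation at `b` followed by reduction mod `p` is injective-at-zero on polynomials,
then a one-variable polynomial over `k[x₁..x_m]` vanishing at `a` must be zero. -/
private lemma kill_poly {k D : Type*} [Field k] [CommRing D] [IsDomain D] [Algebra k D]
    {m : ℕ} {p : Ideal D} {a : D} (ha0 : a ≠ 0)
    (hap : Ideal.Quotient.mk p a = 0) {b : Fin m → D}
    (hb : ∀ c : MvPolynomial (Fin m) k,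
      Ideal.Quotient.mk p (MvPolynomial.aeval b c) = 0 → c = 0) :
    ∀ P : Polynomial (MvPolynomial (Fin m) k),
      Polynomial.eval₂ (MvPolynomial.aeval b).toRingHom a P = 0 → P = 0 := by
  have key : ∀ P : Polynomial (MvPolynomial (Fin m) k),
      Polynomial.eval₂ (MvPolynomial.aeval b).toRingHom a P = 0 → P.coeff 0 = 0 := by
    intro P hP
    apply hb
    have := congrArg (Ideal.Quotient.mk p) hP
    rw [map_zero, Polynomial.hom_eval₂, hap, Polynomial.eval₂_at_zero] at this
    simpa using this
  suffices H : ∀ (N : ℕ) (P : Polynomial (MvPolynomial (Fin m) k)), P.natDegree ≤ N →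
      Polynomial.eval₂ (MvPolynomial.aeval b).toRingHom a P = 0 → P = 0 by
    exact fun P hP => H P.natDegree P le_rfl hP
  intro N
  induction N with
  | zero =>
    intro P hdeg hP
    rw [Polynomial.eq_C_of_natDegree_le_zero hdeg, key P hP, map_zero]
  | succ N ih =>
    intro P hdeg hP
    obtain ⟨Q, rfl⟩ := Polynomial.X_dvd_iff.mpr (key P hP)
    rcases eq_or_ne Q 0 with rfl | hQ
    · simp
    rw [Polynomial.eval₂_mul, Polynomial.eval₂_X, mul_eq_zero] at hP
    have hQ0 : Polynomial.eval₂ (MvPolynomial.aeval b).toRingHom a Q = 0 :=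
      hP.resolve_left ha0
    have hQdeg : Q.natDegree ≤ N := by
      have := Polynomial.natDegree_mul (Polynomial.X_ne_zero
        (R := MvPolynomial (Fin m) k)) hQ
      rw [Polynomial.natDegree_X] at this
      omega
    rw [ih Q hQdeg hQ0, mul_zero]

/-- If `q₀ ≤ q₁` are primes, `a ∈ q₁ \ q₀`, and `b` is algebraically independent mod `q₁`,
then `Fin.cons a b` is algebraically independent. -/
private lemma cons_indep {k A : Type*} [Field k] [CommRing A] [Algebra k A]
    {q₀ q₁ : Ideal A} [q₀.IsPrime] (hle : q₀ ≤ q₁)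
    {a : A} (ha1 : a ∈ q₁) (ha0 : a ∉ q₀) {m : ℕ} {b : Fin m → A}
    (hb : AlgebraicIndependent k ((Ideal.Quotient.mk q₁) ∘ b)) :
    AlgebraicIndependent k (Fin.cons a b : Fin (m + 1) → A) := by
  rw [algebraicIndependent_iff]
  intro P hP
  -- pass to the quotient domain D = A ⧸ q₀
  set mk₀ := Ideal.Quotient.mk q₀
  have hP' : MvPolynomial.aeval (Fin.cons (mk₀ a) (mk₀ ∘ b) : Fin (m + 1) → A ⧸ q₀) P = 0 := by
    have : MvPolynomial.aeval (mk₀ ∘ (Fin.cons a b : Fin (m + 1) → A)) P = 0 := by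
      rw [mk_aeval, hP, map_zero]
    rwa [Fin.comp_cons] at this
  rw [aux_eval] at hP'
  set p : Ideal (A ⧸ q₀) := q₁.map mk₀ with hp
  have hmem : ∀ x : A, mk₀ x ∈ p ↔ x ∈ q₁ := fun x => Ideal.mem_quotient_iff_mem hle
  have h1 : Ideal.Quotient.mk p (mk₀ a) = 0 :=
    Ideal.Quotient.eq_zero_iff_mem.mpr ((hmem a).mpr ha1)
  have h0 : mk₀ a ≠ 0 := fun hh => ha0 (Ideal.Quotient.eq_zero_iff_mem.mp hh)
  have hb' : ∀ c : MvPolynomial (Fin m) k,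
      Ideal.Quotient.mk p (MvPolynomial.aeval (mk₀ ∘ b) c) = 0 → c = 0 := by
    intro c hc
    rw [mk_aeval, Ideal.Quotient.eq_zero_iff_mem, hmem] at hc
    apply algebraicIndependent_iff.mp hb
    rw [mk_aeval, Ideal.Quotient.eq_zero_iff_mem]
    exact hc
  have := kill_poly h0 h1 hb' _ hP'
  exact (MvPolynomial.finSuccEquiv k m).injective (by simpa using this)

/-- A strict chain of primes of length `m` yields `m` algebraically independent elements. -/
private lemma chain_indep (k : Type*) [Field k] :
    ∀ (m : ℕ) (A : Type _) [CommRing A] [Algebra k A]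
      (q : Fin (m + 1) → PrimeSpectrum A), StrictMono q →
      ∃ x : Fin m → A, AlgebraicIndependent k x := by
  intro m
  induction m with
  | zero =>
    intro A _ _ q _
    haveI : Nontrivial A := by
      rcases subsingleton_or_nontrivial A with hs | hnt
      · exact absurd (Subsingleton.elim ((q 0).asIdeal) ⊤) (q 0).isPrime.ne_top
      · exact hnt
    exact ⟨Fin.elim0, algebraicIndependent_empty_type_iff.mpr (algebraMap k A).injective⟩
  | succ m ih =>
    intro A _ _ q hq
    set q₀ := (q 0).asIdeal
    set q₁ := (q 1).asIdeal
    have hlt : q₀ < q₁ := by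
      have h01 : q 0 < q 1 := hq (by norm_num [Fin.lt_def])
      refine lt_of_le_of_ne ((PrimeSpectrum.asIdeal_le_asIdeal _ _).mpr h01.le) ?_
      intro hEq
      exact h01.ne (PrimeSpectrum.ext hEq)
    obtain ⟨a, ha1, ha0⟩ := SetLike.exists_of_lt hlt
    have hle : ∀ i : Fin (m + 1), q₁ ≤ (q i.succ).asIdeal := by
      intro i
      refine (PrimeSpectrum.asIdeal_le_asIdeal _ _).mpr (hq.monotone ?_)
      exact Fin.succ_le_succ_iff.mpr (Fin.zero_le i)
    have hcm : ∀ I : Ideal A, q₁ ≤ I →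
        (I.map (Ideal.Quotient.mk q₁)).comap (Ideal.Quotient.mk q₁) = I := by
      intro I hI
      rw [Ideal.comap_map_of_surjective _ Ideal.Quotient.mk_surjective,
        ← RingHom.ker_eq_comap_bot, Ideal.mk_ker]
      exact sup_eq_left.mpr hI
    have hprime : ∀ i : Fin (m + 1),
        ((q i.succ).asIdeal.map (Ideal.Quotient.mk q₁)).IsPrime := by
      intro i
      exact Ideal.map_isPrime_of_surjective Ideal.Quotient.mk_surjective
        (by rw [Ideal.mk_ker]; exact hle i)
    set q' : Fin (m + 1) → PrimeSpectrum (A ⧸ q₁) :=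
      fun i => ⟨(q i.succ).asIdeal.map (Ideal.Quotient.mk q₁), hprime i⟩ with hq'
    have hq'mono : StrictMono q' := by
      intro i j hij
      have hij' : (q i.succ).asIdeal < (q j.succ).asIdeal := by
        have := hq (Fin.succ_lt_succ_iff.mpr hij)
        refine lt_of_le_of_ne ((PrimeSpectrum.asIdeal_le_asIdeal _ _).mpr this.le) ?_
        intro hEq
        exact this.ne (PrimeSpectrum.ext hEq)
      refine lt_of_le_of_ne ?_ ?_
      · exact (PrimeSpectrum.asIdeal_le_asIdeal _ _).mp (Ideal.map_mono hij'.le)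
      · intro hEq
        have : (q i.succ).asIdeal = (q j.succ).asIdeal := by
          rw [← hcm _ (hle i), ← hcm _ (hle j)]
          congr 1
          exact congrArg PrimeSpectrum.asIdeal hEq
        exact hij'.ne this
    obtain ⟨y, hy⟩ := ih (A ⧸ q₁) q' hq'mono
    choose b hbspec using fun i => Ideal.Quotient.mk_surjective (I := q₁) (y i)
    have hbcomp : (Ideal.Quotient.mk q₁) ∘ b = y := funext hbspec
    have hb : AlgebraicIndependent k ((Ideal.Quotient.mk q₁) ∘ b) := hbcomp ▸ hy
    exact ⟨Fin.cons a b, cons_indep hlt.le ha1 ha0 hb⟩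

private lemma ringKrullDim_le_of_bound {k : Type*} (A : Type*) [Field k] [CommRing A]
    [Algebra k A] (n : ℕ)
    (h : ∀ (m : ℕ) (f : MvPolynomial (Fin m) k →ₐ[k] A), Function.Injective f → m ≤ n) :
    ringKrullDim A ≤ n := by
  rw [ringKrullDim, Order.krullDim]
  apply iSup_le
  intro l
  obtain ⟨x, hx⟩ := chain_indep k l.length A l.toFun l.strictMono
  have hm : l.length ≤ n :=
    h l.length (MvPolynomial.aeval x) (algebraicIndependent_iff_injective_aeval.mp hx)
  exact_mod_cast hm

/-- Let `k` be a field, `A` a commutative `k`-algebra and `n : ℕ`. If every injective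
`k`-algebra homomorphism `k[x₁, …, x_m] → A` satisfies `m ≤ n`, then every finite type
`k`-subalgebra of `A` has Krull dimension at most `n`, and the Krull dimension of `A`
itself is at most `n`. -/
theorem krull_dimension_le_of_transcendence_bound
    (k A : Type*) [Field k] [CommRing A] [Algebra k A] (n : ℕ)
    (h : ∀ (m : ℕ) (f : MvPolynomial (Fin m) k →ₐ[k] A), Function.Injective f → m ≤ n) :
    (∀ B : Subalgebra k A, B.FG → ringKrullDim B ≤ n) ∧ ringKrullDim A ≤ n := by
  constructor
  · intro B _
    apply ringKrullDim_le_of_bound (k := k) B n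
    intro m f hf
    refine h m (B.val.comp f) ?_
    have : Function.Injective (B.val : B →ₐ[k] A) := Subtype.val_injective
    simpa [AlgHom.coe_comp] using this.comp hf
  · exact ringKrullDim_le_of_bound A n h
end
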